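/- With u(y; u_τ) defined as the integral ∫₀^y (2 u_τ²/ν)/(1 + √(1 + 4 ℓ_m⁺(u_τ y'/ν)²)) dy' (ℓ_m⁺(z) = κ z(1 − e^{−z/A}), κ, A, ν > 0), for every fixed h > 0 and every U > 0 there exists a unique u_τ > 0 such that u(h; u_τ) = U. -/

import Mathlib

lemma exp_ratio_aux {x y : ℝ} (hx : 0 < x) (hxy : x ≤ y) :
    x * (1 - Real.exp (-y)) ≤ y * (1 - Real.exp (-x)) := by
  have hy : 0 < y := hx.trans_le hxy
  have ht0 : (0:ℝ) ≤ x / y := by positivity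
  have ht1 : x / y ≤ 1 := (div_le_one hy).mpr hxy
  have hconv := convexOn_exp.2 (Set.mem_univ (0:ℝ)) (Set.mem_univ (-y))
    (show (0:ℝ) ≤ 1 - x/y by linarith) (show (0:ℝ) ≤ x/y from ht0) (by ring)
  simp only [smul_eq_mul, mul_zero, Real.exp_zero, mul_one, zero_add] at hconv
  have harg : x / y * -y = -x := by field_simp
  rw [harg] at hconv
  have := mul_le_mul_of_nonneg_left hconv hy.le
  have hc : y * ((1 - x/y) + x/y * Real.exp (-y)) = y - x + x * Real.exp (-y) := by
    field_simp
  nlinarith [this, hc]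

lemma exp_ratio' {a b c : ℝ} (ha : 0 < a) (hab : a ≤ b) (hc : 0 < c) :
    a * (1 - Real.exp (-(b * c))) ≤ b * (1 - Real.exp (-(a * c))) := by
  have h2 := exp_ratio_aux (mul_pos ha hc) (by nlinarith : a * c ≤ b * c)
  have h3 : a * (1 - Real.exp (-(b * c))) * c ≤ b * (1 - Real.exp (-(a * c))) * c := by
    nlinarith [h2]
  exact le_of_mul_le_mul_right h3 hc

lemma frac_mono {ν a b ℓa ℓb : ℝ} (hν : 0 < ν) (ha : 0 < a) (hab : a < b)
    (hℓa0 : 0 ≤ ℓa) (hℓb0 : 0 ≤ ℓb) (hkey : a ^ 2 * ℓb ≤ b ^ 2 * ℓa) :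
    (2 * a ^ 2 / ν) * (1 / (1 + Real.sqrt (1 + 4 * ℓa ^ 2))) <
    (2 * b ^ 2 / ν) * (1 / (1 + Real.sqrt (1 + 4 * ℓb ^ 2))) := by
  have hb : 0 < b := ha.trans hab
  have hsa0 : 0 ≤ Real.sqrt (1 + 4 * ℓa ^ 2) := Real.sqrt_nonneg _
  have hsb0 : 0 ≤ Real.sqrt (1 + 4 * ℓb ^ 2) := Real.sqrt_nonneg _
  have h1 : a ^ 2 * Real.sqrt (1 + 4 * ℓb ^ 2) ≤ b ^ 2 * Real.sqrt (1 + 4 * ℓa ^ 2) := by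
    have e1 : a ^ 2 * Real.sqrt (1 + 4 * ℓb ^ 2)
        = Real.sqrt ((a ^ 2) ^ 2 * (1 + 4 * ℓb ^ 2)) := by
      rw [Real.sqrt_mul (by positivity), Real.sqrt_sq (by positivity)]
    have e2 : b ^ 2 * Real.sqrt (1 + 4 * ℓa ^ 2)
        = Real.sqrt ((b ^ 2) ^ 2 * (1 + 4 * ℓa ^ 2)) := by
      rw [Real.sqrt_mul (by positivity), Real.sqrt_sq (by positivity)]
    rw [e1, e2]
    apply Real.sqrt_le_sqrt
    nlinarith [mul_self_le_mul_self (mul_nonneg (sq_nonneg a) hℓb0) hkey,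
      pow_le_pow_left₀ ha.le hab.le 4]
  have hab2 : a ^ 2 < b ^ 2 := by nlinarith
  generalize hsa : Real.sqrt (1 + 4 * ℓa ^ 2) = sa at h1 hsa0 ⊢
  generalize hsb : Real.sqrt (1 + 4 * ℓb ^ 2) = sb at h1 hsb0 ⊢
  rw [mul_one_div, mul_one_div, div_div, div_div,
    div_lt_div_iff₀ (by positivity) (by positivity)]
  nlinarith [mul_le_mul_of_nonneg_left h1 (by linarith : (0:ℝ) ≤ 2 * ν),
    mul_lt_mul_of_pos_left hab2 (by linarith : (0:ℝ) < 2 * ν)]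

lemma integrand_mono {κ A ν : ℝ} (hκ : 0 < κ) (hA : 0 < A) (hν : 0 < ν)
    {a b y' : ℝ} (ha : 0 < a) (hab : a < b) (hy : 0 < y') :
    (2 * a ^ 2 / ν) * (1 / (1 + Real.sqrt (1 + 4 * (κ * (a * y' / ν) * (1 - Real.exp (-(a * y' / ν) / A))) ^ 2))) <
    (2 * b ^ 2 / ν) * (1 / (1 + Real.sqrt (1 + 4 * (κ * (b * y' / ν) * (1 - Real.exp (-(b * y' / ν) / A))) ^ 2))) := by
  have hb : 0 < b := ha.trans hab
  have hEa1 : Real.exp (-(a * y' / ν) / A) ≤ 1 := by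
    rw [neg_div]
    exact Real.exp_le_one_iff.mpr (neg_nonpos.mpr (by positivity))
  have hEb1 : Real.exp (-(b * y' / ν) / A) ≤ 1 := by
    rw [neg_div]
    exact Real.exp_le_one_iff.mpr (neg_nonpos.mpr (by positivity))
  apply frac_mono hν ha hab
  · exact mul_nonneg (by positivity) (by linarith)
  · exact mul_nonneg (by positivity) (by linarith)
  · have hc : 0 < y' / (ν * A) := by positivity
    have hEa' : -(a * y' / ν) / A = -(a * (y' / (ν * A))) := by ring
    have hEb' : -(b * y' / ν) / A = -(b * (y' / (ν * A))) := by ring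
    rw [hEa', hEb']
    have hstep := exp_ratio' ha hab.le hc
    have h2 := mul_le_mul_of_nonneg_left hstep
      (by positivity : (0:ℝ) ≤ κ * (y' / ν) * a * b)
    calc a ^ 2 * (κ * (b * y' / ν) * (1 - Real.exp (-(b * (y' / (ν * A))))))
        = κ * (y' / ν) * a * b * (a * (1 - Real.exp (-(b * (y' / (ν * A)))))) := by ring
      _ ≤ κ * (y' / ν) * a * b * (b * (1 - Real.exp (-(a * (y' / (ν * A)))))) := h2
      _ = b ^ 2 * (κ * (a * y' / ν) * (1 - Real.exp (-(a * (y' / (ν * A)))))) := by ring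

noncomputable def Fwm (κ A ν h : ℝ) (uτ : ℝ) : ℝ :=
  ∫ y' in (0:ℝ)..h, (2 * uτ ^ 2 / ν) *
    (1 / (1 + Real.sqrt (1 + 4 * (κ * (uτ * y' / ν) * (1 - Real.exp (-(uτ * y' / ν) / A))) ^ 2)))

lemma Fwm_uncurry_cont (κ A ν : ℝ) :
    Continuous (fun p : ℝ × ℝ => (2 * p.1 ^ 2 / ν) *
      (1 / (1 + Real.sqrt (1 + 4 * (κ * (p.1 * p.2 / ν) * (1 - Real.exp (-(p.1 * p.2 / ν) / A))) ^ 2)))) := by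
  have hD : Continuous fun p : ℝ × ℝ =>
      1 + Real.sqrt (1 + 4 * (κ * (p.1 * p.2 / ν) * (1 - Real.exp (-(p.1 * p.2 / ν) / A))) ^ 2) := by
    fun_prop
  have hne : ∀ p : ℝ × ℝ,
      1 + Real.sqrt (1 + 4 * (κ * (p.1 * p.2 / ν) * (1 - Real.exp (-(p.1 * p.2 / ν) / A))) ^ 2) ≠ 0 :=
    fun p => by positivity
  simp only [one_div]
  exact Continuous.mul (by fun_prop) (hD.inv₀ hne)

lemma Fwm_cont (κ A ν h : ℝ) : Continuous (Fwm κ A ν h) := by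
  exact intervalIntegral.continuous_parametric_intervalIntegral_of_continuous'
    (f := fun uτ y' => (2 * uτ ^ 2 / ν) *
      (1 / (1 + Real.sqrt (1 + 4 * (κ * (uτ * y' / ν) * (1 - Real.exp (-(uτ * y' / ν) / A))) ^ 2))))
    (Fwm_uncurry_cont κ A ν) 0 h

lemma Fwm_slice_cont (κ A ν : ℝ) (uτ : ℝ) :
    Continuous (fun y' : ℝ => (2 * uτ ^ 2 / ν) *
      (1 / (1 + Real.sqrt (1 + 4 * (κ * (uτ * y' / ν) * (1 - Real.exp (-(uτ * y' / ν) / A))) ^ 2)))) := by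
  have := (Fwm_uncurry_cont κ A ν).comp (Continuous.prodMk_right uτ)
  exact this

lemma Fwm_upper (κ A ν h : ℝ) (hν : 0 < ν) (hh : 0 < h) (uτ : ℝ) :
    Fwm κ A ν h uτ ≤ h * uτ ^ 2 / ν := by
  have hmono := intervalIntegral.integral_mono_on (μ := MeasureTheory.volume)
    (f := fun y' : ℝ => (2 * uτ ^ 2 / ν) *
      (1 / (1 + Real.sqrt (1 + 4 * (κ * (uτ * y' / ν) * (1 - Real.exp (-(uτ * y' / ν) / A))) ^ 2))))
    (g := fun _ : ℝ => uτ ^ 2 / ν) hh.le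
    ((Fwm_slice_cont κ A ν uτ).intervalIntegrable (μ := MeasureTheory.volume) 0 h)
    (intervalIntegrable_const)
    (by
      intro x hx
      have hs : (1:ℝ) ≤ Real.sqrt (1 + 4 * (κ * (uτ * x / ν) * (1 - Real.exp (-(uτ * x / ν) / A))) ^ 2) := by
        have h' := Real.sqrt_le_sqrt (show (1:ℝ) ≤ 1 + 4 * (κ * (uτ * x / ν) * (1 - Real.exp (-(uτ * x / ν) / A))) ^ 2
          from by nlinarith [sq_nonneg (κ * (uτ * x / ν) * (1 - Real.exp (-(uτ * x / ν) / A)))])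
        rwa [Real.sqrt_one] at h'
      have h2 : 1 / (1 + Real.sqrt (1 + 4 * (κ * (uτ * x / ν) * (1 - Real.exp (-(uτ * x / ν) / A))) ^ 2))
          ≤ 1 / 2 := by
        apply one_div_le_one_div_of_le (by norm_num) (by linarith)
      have h3 : (0:ℝ) ≤ 2 * uτ ^ 2 / ν := by positivity
      calc (2 * uτ ^ 2 / ν) * (1 / (1 + Real.sqrt (1 + 4 * (κ * (uτ * x / ν) * (1 - Real.exp (-(uτ * x / ν) / A))) ^ 2)))
          ≤ (2 * uτ ^ 2 / ν) * (1 / 2) := mul_le_mul_of_nonneg_left h2 h3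
        _ = uτ ^ 2 / ν := by ring)
  calc Fwm κ A ν h uτ ≤ ∫ _ in (0:ℝ)..h, uτ ^ 2 / ν := hmono
    _ = h * uτ ^ 2 / ν := by
        rw [intervalIntegral.integral_const]
        simp [smul_eq_mul]; ring

lemma Fwm_lower (κ A ν h : ℝ) (hκ : 0 < κ) (hA : 0 < A) (hν : 0 < ν) (hh : 0 < h)
    {uτ : ℝ} (huτ : 0 < uτ) :
    h * (uτ ^ 2 / (ν + κ * uτ * h)) ≤ Fwm κ A ν h uτ := by
  have hden : (0:ℝ) < ν + κ * uτ * h := by positivity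
  have hmono := intervalIntegral.integral_mono_on (μ := MeasureTheory.volume)
    (f := fun _ : ℝ => uτ ^ 2 / (ν + κ * uτ * h))
    (g := fun y' : ℝ => (2 * uτ ^ 2 / ν) *
      (1 / (1 + Real.sqrt (1 + 4 * (κ * (uτ * y' / ν) * (1 - Real.exp (-(uτ * y' / ν) / A))) ^ 2))))
    hh.le (intervalIntegrable_const)
    ((Fwm_slice_cont κ A ν uτ).intervalIntegrable (μ := MeasureTheory.volume) 0 h)
    (by
      intro x hx
      obtain ⟨hx0, hxh⟩ := hx
      set c : ℝ := κ * uτ * h / ν with hc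
      have hc0 : 0 ≤ c := by positivity
      have hE1 : Real.exp (-(uτ * x / ν) / A) ≤ 1 := by
        rw [neg_div]
        exact Real.exp_le_one_iff.mpr (neg_nonpos.mpr (by positivity))
      have hE0 : 0 < Real.exp (-(uτ * x / ν) / A) := Real.exp_pos _
      have hl0 : 0 ≤ κ * (uτ * x / ν) * (1 - Real.exp (-(uτ * x / ν) / A)) :=
        mul_nonneg (by positivity) (by linarith)
      have hlc : κ * (uτ * x / ν) * (1 - Real.exp (-(uτ * x / ν) / A)) ≤ c := by
        rw [hc]
        have h1 : κ * (uτ * x / ν) * (1 - Real.exp (-(uτ * x / ν) / A)) ≤ κ * (uτ * x / ν) * 1 :=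
          mul_le_mul_of_nonneg_left (by linarith) (by positivity)
        have h2 : κ * (uτ * x / ν) * 1 ≤ κ * uτ * h / ν := by
          rw [mul_one, show κ * (uτ * x / ν) = κ * uτ * x / ν from by ring]
          gcongr
        linarith
      have hs : Real.sqrt (1 + 4 * (κ * (uτ * x / ν) * (1 - Real.exp (-(uτ * x / ν) / A))) ^ 2)
          ≤ 1 + 2 * c := by
        rw [show (1:ℝ) + 2 * c = Real.sqrt ((1 + 2 * c) ^ 2) from
          (Real.sqrt_sq (by positivity)).symm]
        exact Real.sqrt_le_sqrt (by nlinarith)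
      have hs0 : 0 ≤ Real.sqrt (1 + 4 * (κ * (uτ * x / ν) * (1 - Real.exp (-(uτ * x / ν) / A))) ^ 2) :=
        Real.sqrt_nonneg _
      have h2 : 1 / (2 + 2 * c)
          ≤ 1 / (1 + Real.sqrt (1 + 4 * (κ * (uτ * x / ν) * (1 - Real.exp (-(uτ * x / ν) / A))) ^ 2)) :=
        one_div_le_one_div_of_le (by linarith) (by linarith)
      have h3 : (0:ℝ) ≤ 2 * uτ ^ 2 / ν := by positivity
      have h4 : (2 * uτ ^ 2 / ν) * (1 / (2 + 2 * c)) = uτ ^ 2 / (ν + κ * uτ * h) := by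
        rw [hc]
        field_simp
      calc uτ ^ 2 / (ν + κ * uτ * h) = (2 * uτ ^ 2 / ν) * (1 / (2 + 2 * c)) := h4.symm
        _ ≤ _ := mul_le_mul_of_nonneg_left h2 h3)
  calc h * (uτ ^ 2 / (ν + κ * uτ * h)) = ∫ _ in (0:ℝ)..h, uτ ^ 2 / (ν + κ * uτ * h) := by
        rw [intervalIntegral.integral_const]; simp [smul_eq_mul]
    _ ≤ Fwm κ A ν h uτ := hmono

lemma Fwm_strictMono (κ A ν h : ℝ) (hκ : 0 < κ) (hA : 0 < A) (hν : 0 < ν) (hh : 0 < h)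
    {a b : ℝ} (ha : 0 < a) (hab : a < b) :
    Fwm κ A ν h a < Fwm κ A ν h b := by
  have hia := (Fwm_slice_cont κ A ν a).intervalIntegrable (μ := MeasureTheory.volume) 0 h
  have hib := (Fwm_slice_cont κ A ν b).intervalIntegrable (μ := MeasureTheory.volume) 0 h
  have hpos := intervalIntegral.intervalIntegral_pos_of_pos_on (hib.sub hia)
    (fun x hx => sub_pos.mpr (integrand_mono hκ hA hν ha hab hx.1)) hh
  rw [intervalIntegral.integral_sub hib hia] at hpos
  unfold Fwm
  linarith

theorem stmt_4 (κ A ν : ℝ) (hκ : 0 < κ) (hA : 0 < A) (hν : 0 < ν)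
    (ℓm : ℝ → ℝ) (hℓm : ∀ z, ℓm z = κ * z * (1 - Real.exp (-z / A)))
    (u : ℝ → ℝ → ℝ)
    (hu : ∀ y uτ, u y uτ = ∫ y' in (0:ℝ)..y,
      (2 * uτ ^ 2 / ν) * (1 / (1 + Real.sqrt (1 + 4 * (ℓm (uτ * y' / ν)) ^ 2))))
    (h U : ℝ) (hh : 0 < h) (hU : 0 < U) :
    ∃! uτ : ℝ, 0 < uτ ∧ u h uτ = U := by
  have hFeq : ∀ uτ, u h uτ = Fwm κ A ν h uτ := by
    intro uτ
    rw [hu]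
    unfold Fwm
    simp only [hℓm]
  set a := Real.sqrt (U * ν / (2 * h)) with hadef
  have ha0 : 0 < a := Real.sqrt_pos.mpr (by positivity)
  have ha2 : a ^ 2 = U * ν / (2 * h) := Real.sq_sqrt (by positivity)
  have hFa : Fwm κ A ν h a ≤ U / 2 := by
    have h1 := Fwm_upper κ A ν h hν hh a
    have h2 : h * a ^ 2 / ν = U / 2 := by rw [ha2]; field_simp
    linarith
  set b := max a (max 1 (U * (ν + κ * h) / h + 1)) with hbdef
  have hab' : a ≤ b := le_max_left _ _
  have hb1 : (1:ℝ) ≤ b := le_trans (le_max_left _ _) (le_max_right _ _)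
  have hbU : U * (ν + κ * h) / h + 1 ≤ b := le_trans (le_max_right _ _) (le_max_right _ _)
  have hb0 : (0:ℝ) < b := lt_of_lt_of_le one_pos hb1
  have hUb : U < Fwm κ A ν h b := by
    have hlow := Fwm_lower κ A ν h hκ hA hν hh hb0
    have hd1 : (0:ℝ) < ν + κ * h := by positivity
    have hd2 : (0:ℝ) < ν + κ * b * h := by positivity
    have step1 : U * (ν + κ * h) + h ≤ h * b := by
      have h5 := mul_le_mul_of_nonneg_left hbU hh.le
      have e : h * (U * (ν + κ * h) / h + 1) = U * (ν + κ * h) + h := by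
        field_simp
      rw [e] at h5
      linarith
    have step2 : U < h * b / (ν + κ * h) := by
      rw [lt_div_iff₀ hd1]; nlinarith
    have step3 : h * b / (ν + κ * h) ≤ h * (b ^ 2 / (ν + κ * b * h)) := by
      rw [show h * (b ^ 2 / (ν + κ * b * h)) = h * b ^ 2 / (ν + κ * b * h) from by ring,
        div_le_div_iff₀ hd1 hd2]
      have hbb : b ≤ b ^ 2 := by nlinarith
      nlinarith [mul_nonneg (mul_nonneg hh.le hν.le) (sub_nonneg.mpr hbb)]
    linarith
  have hivt := intermediate_value_Icc hab' ((Fwm_cont κ A ν h).continuousOn (s := Set.Icc a b))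
  have hmem : U ∈ Set.Icc (Fwm κ A ν h a) (Fwm κ A ν h b) := ⟨by linarith, hUb.le⟩
  obtain ⟨uτ, huτm, huτe⟩ := hivt hmem
  have huτ0 : 0 < uτ := lt_of_lt_of_le ha0 huτm.1
  refine ⟨uτ, ⟨huτ0, by rw [hFeq]; exact huτe⟩, ?_⟩
  rintro y ⟨hy0, hye⟩
  rw [hFeq] at hye
  by_contra hne
  rcases lt_or_gt_of_ne hne with hlt | hgt
  · have := Fwm_strictMono κ A ν h hκ hA hν hh hy0 hlt
    rw [hye, huτe] at this
    exact lt_irrefl U this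
  · have := Fwm_strictMono κ A ν h hκ hA hν hh huτ0 hgt
    rw [hye, huτe] at this
    exact lt_irrefl U this
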